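/- arXiv:1901.01644 — 6 statements merged into one kernel-verified Lean document; each statement's English description precedes it below -/
import Mathlib

section
/- Let n ≥ 1, let A be an n×n complex matrix and B a symmetric n×n complex matrix. Then the orbit of (A,B) under the action Ξ of ℂ* × GL_n(ℂ) given by ((c,P),(A,B)) ↦ (c·P*AP, c̄·PᵀBP) coincides with the orbit of (A,B) under the action Ψ of S¹ × GL_n(ℂ) given by ((c,P),(A,B)) ↦ (c·P*AP, PᵀBP); that is, {(c·P*AP, c̄·PᵀBP) : c ∈ ℂ, c ≠ 0, P ∈ GL_n(ℂ)} = {(c·P*AP, PᵀBP) : c ∈ ℂ, |c| = 1, P ∈ GL_n(ℂ)}. -/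
open Matrix

/-- For `n ≥ 1`, an `n×n` complex matrix `A` and a symmetric `n×n` complex
matrix `B`, the orbit of `(A,B)` under the action `Ξ` of `ℂ* × GLₙ(ℂ)`,
`((c,P),(A,B)) ↦ (c·P*AP, c̄·PᵀBP)`, coincides with the orbit of `(A,B)` under the action
`Ψ` of `S¹ × GLₙ(ℂ)`, `((c,P),(A,B)) ↦ (c·P*AP, PᵀBP)`. -/
theorem orbit_Xi_eq_orbit_Psi (n : ℕ) (hn : 1 ≤ n)
    (A B : Matrix (Fin n) (Fin n) ℂ) (hB : B.IsSymm) :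
    {x : Matrix (Fin n) (Fin n) ℂ × Matrix (Fin n) (Fin n) ℂ |
        ∃ (c : ℂ) (P : Matrix (Fin n) (Fin n) ℂ), c ≠ 0 ∧ IsUnit P ∧
          x = (c • (Pᴴ * A * P), (star c) • (Pᵀ * B * P))} =
    {x : Matrix (Fin n) (Fin n) ℂ × Matrix (Fin n) (Fin n) ℂ |
        ∃ (c : ℂ) (P : Matrix (Fin n) (Fin n) ℂ), ‖c‖ = 1 ∧ IsUnit P ∧
          x = (c • (Pᴴ * A * P), Pᵀ * B * P)} := by
  have sqrt : ∀ z : ℂ, ∃ t : ℂ, t ^ 2 = z := fun z =>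
    ⟨z ^ (((2 : ℕ) : ℂ)⁻¹), Complex.cpow_nat_inv_pow z two_ne_zero⟩
  ext x
  simp only [Set.mem_setOf_eq]
  constructor
  · rintro ⟨c, P, hc, hP, rfl⟩
    obtain ⟨t, ht⟩ := sqrt (star c)
    have ht0 : t ≠ 0 := by
      intro h
      apply hc
      rw [h] at ht
      simpa using ht.symm
    have hst : star t ≠ 0 := star_ne_zero.mpr ht0
    have hnt : ‖t‖ ^ 2 = ‖c‖ := by
      rw [← norm_pow, ht, norm_star]
    refine ⟨c / (t * star t), t • P, ?_, (IsUnit.smul (Units.mk0 t ht0) hP), ?_⟩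
    · rw [norm_div, norm_mul, norm_star, ← sq, hnt,
        div_self (norm_ne_zero_iff.mpr hc)]
    · ext1
      · simp only [conjTranspose_smul, Matrix.smul_mul, Matrix.mul_smul, smul_smul]
        congr 1
        have hst' : (starRingEnd ℂ) t ≠ 0 := hst
        field_simp
      · simp only [transpose_smul, Matrix.smul_mul, Matrix.mul_smul, smul_smul, ← ht]
        congr 1
        ring
  · rintro ⟨c, P, hc, hP, rfl⟩
    have hc0 : c ≠ 0 := by intro h; simp [h] at hc
    obtain ⟨t, ht⟩ := sqrt c
    have ht0 : t ≠ 0 := by intro h; rw [h] at ht; exact hc0 (by simpa using ht.symm)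
    have hnt : ‖t‖ ^ 2 = 1 := by rw [← norm_pow, ht, hc]
    have htt : t * star t = 1 := by
      rw [show (star t : ℂ) = (starRingEnd ℂ) t from rfl, Complex.mul_conj,
        Complex.normSq_eq_norm_sq, hnt]
      norm_num
    have hcc : star c * (t * t) = 1 := by
      rw [← sq, ht, show (star c : ℂ) = (starRingEnd ℂ) c from rfl, mul_comm,
        Complex.mul_conj, Complex.normSq_eq_norm_sq, hc]
      norm_num
    refine ⟨c, t • P, hc0, (IsUnit.smul (Units.mk0 t ht0) hP), ?_⟩
    ext1
    · simp only [conjTranspose_smul, Matrix.smul_mul, Matrix.mul_smul, smul_smul]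
      rw [htt, mul_one]
    · simp only [transpose_smul, Matrix.smul_mul, Matrix.mul_smul, smul_smul]
      rw [hcc, one_smul]
end

section
/- Let A, Ã be n×n complex matrices and B, B̃ symmetric n×n complex matrices. If (Ã,B̃) lies in the closure of the orbit Orb_Ψ(A,B) = {(c·P*AP, PᵀBP) : c ∈ ℂ, |c| = 1, P ∈ GL_n(ℂ)}, then |det Ã|·|det B| = |det B̃|·|det A|. -/
set_option maxHeartbeats 1000000


open Matrix

/-- If `(Ã,B̃)` lies in the closure of
`Orb_Ψ(A,B) = {(c·P*AP, PᵀBP) : |c| = 1, P ∈ GLₙ(ℂ)}`, then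
`|det Ã|·|det B| = |det B̃|·|det A|`. -/
theorem closure_orbit_det_relation (n : ℕ)
    (A A' B B' : Matrix (Fin n) (Fin n) ℂ) (hB : B.IsSymm) (hB' : B'.IsSymm)
    (hmem : (A', B') ∈ closure {x : Matrix (Fin n) (Fin n) ℂ × Matrix (Fin n) (Fin n) ℂ |
        ∃ (c : ℂ) (P : Matrix (Fin n) (Fin n) ℂ), ‖c‖ = 1 ∧ IsUnit P ∧
          x = (c • (Pᴴ * A * P), Pᵀ * B * P)}) :
    ‖A'.det‖ * ‖B.det‖ = ‖B'.det‖ * ‖A.det‖ := by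
  have hclosed : IsClosed {x : Matrix (Fin n) (Fin n) ℂ × Matrix (Fin n) (Fin n) ℂ |
      ‖x.1.det‖ * ‖B.det‖ = ‖x.2.det‖ * ‖A.det‖} := by
    apply isClosed_eq
    · exact ((Continuous.matrix_det continuous_fst).norm).mul continuous_const
    · exact ((Continuous.matrix_det continuous_snd).norm).mul continuous_const
  have hsub : {x : Matrix (Fin n) (Fin n) ℂ × Matrix (Fin n) (Fin n) ℂ |
        ∃ (c : ℂ) (P : Matrix (Fin n) (Fin n) ℂ), ‖c‖ = 1 ∧ IsUnit P ∧
          x = (c • (Pᴴ * A * P), Pᵀ * B * P)} ⊆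
      {x : Matrix (Fin n) (Fin n) ℂ × Matrix (Fin n) (Fin n) ℂ |
        ‖x.1.det‖ * ‖B.det‖ = ‖x.2.det‖ * ‖A.det‖} := by
    rintro x ⟨c, P, hc, hP, rfl⟩
    simp only [Set.mem_setOf_eq, det_smul, det_mul, det_conjTranspose, det_transpose,
      norm_mul, norm_pow, hc, one_pow, norm_smul]
    simp only [norm_mul, norm_star]
    ring
  have h2 := closure_mono hsub hmem
  rwa [hclosed.closure_eq] at h2
end

section
/- Let Ã, B̃, A, B be invertible 2×2 complex matrices with B, B̃ symmetric, and set p = |det Ã|·|det B| − |det B̃|·|det A|. Suppose p ≠ 0, and let E be a 2×2 complex matrix and F a symmetric 2×2 complex matrix with ‖E‖ < min{1, |p|/(4|det B|(2‖Ã‖+1))} and ‖F‖ < min{1, |p|/(4|det A|(2‖B̃‖+1))}. Then (Ã+E, B̃+F) does not belong to Orb_Ψ(A,B); that is, there is no c ∈ ℂ with |c| = 1 and no P ∈ GL₂(ℂ) such that c·P*AP = Ã+E and PᵀBP = B̃+F. -/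
open Matrix

set_option maxHeartbeats 1000000

/-- The entrywise maximum norm `‖X‖ = max_{j,k} |x_{jk}|` on complex matrices. -/
noncomputable def maxNorm {n : ℕ} (X : Matrix (Fin n) (Fin n) ℂ) : ℝ :=
  ((Finset.univ.sup fun p : Fin n × Fin n => ‖X p.1 p.2‖₊ : NNReal) : ℝ)

lemma maxNorm_entry {n : ℕ} (X : Matrix (Fin n) (Fin n) ℂ) (i j : Fin n) :
    ‖X i j‖ ≤ maxNorm X := by
  have : ‖X i j‖₊ ≤ Finset.univ.sup fun p : Fin n × Fin n => ‖X p.1 p.2‖₊ :=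
    Finset.le_sup (f := fun p : Fin n × Fin n => ‖X p.1 p.2‖₊) (Finset.mem_univ (i, j))
  exact_mod_cast this

lemma maxNorm_nonneg {n : ℕ} (X : Matrix (Fin n) (Fin n) ℂ) : 0 ≤ maxNorm X :=
  NNReal.coe_nonneg _

lemma det_perturb (M N : Matrix (Fin 2) (Fin 2) ℂ) (hN : maxNorm N ≤ 1) :
    ‖(M + N).det - M.det‖ ≤ 2 * maxNorm N * (2 * maxNorm M + 1) := by
  have hm := fun i j => maxNorm_entry M i j
  have hn := fun i j => maxNorm_entry N i j
  have hm0 := maxNorm_nonneg M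
  have hn0 := maxNorm_nonneg N
  simp only [Matrix.det_fin_two, Matrix.add_apply]
  have key : (M 0 0 + N 0 0) * (M 1 1 + N 1 1) - (M 0 1 + N 0 1) * (M 1 0 + N 1 0)
      - (M 0 0 * M 1 1 - M 0 1 * M 1 0)
      = M 0 0 * N 1 1 + N 0 0 * M 1 1 + N 0 0 * N 1 1
        - (M 0 1 * N 1 0 + N 0 1 * M 1 0 + N 0 1 * N 1 0) := by ring
  rw [key]
  have b : ∀ x y : ℂ, ‖x + y‖ ≤ ‖x‖ + ‖y‖ := norm_add_le
  calc ‖M 0 0 * N 1 1 + N 0 0 * M 1 1 + N 0 0 * N 1 1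
        - (M 0 1 * N 1 0 + N 0 1 * M 1 0 + N 0 1 * N 1 0)‖
      ≤ ‖M 0 0 * N 1 1 + N 0 0 * M 1 1 + N 0 0 * N 1 1‖
        + ‖M 0 1 * N 1 0 + N 0 1 * M 1 0 + N 0 1 * N 1 0‖ := norm_sub_le _ _
    _ ≤ (‖M 0 0 * N 1 1‖ + ‖N 0 0 * M 1 1‖ + ‖N 0 0 * N 1 1‖)
        + (‖M 0 1 * N 1 0‖ + ‖N 0 1 * M 1 0‖ + ‖N 0 1 * N 1 0‖) := by
        gcongr <;> [exact norm_add₃_le; exact norm_add₃_le]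
    _ ≤ 2 * maxNorm N * (2 * maxNorm M + 1) := by
        simp only [norm_mul]
        nlinarith [hm 0 0, hm 1 1, hm 0 1, hm 1 0, hn 0 0, hn 1 1, hn 0 1, hn 1 0,
          norm_nonneg (M 0 0), norm_nonneg (M 1 1), norm_nonneg (M 0 1), norm_nonneg (M 1 0),
          norm_nonneg (N 0 0), norm_nonneg (N 1 1), norm_nonneg (N 0 1), norm_nonneg (N 1 0)]

/-- Let `Ã, B̃, A, B` be invertible `2×2` complex matrices with `B, B̃`
symmetric, and `p = |det Ã|·|det B| − |det B̃|·|det A| ≠ 0`. If `E` is a `2×2` matrix and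
`F` a symmetric `2×2` matrix with `‖E‖ < min{1, |p|/(4|det B|(2‖Ã‖+1))}` and
`‖F‖ < min{1, |p|/(4|det A|(2‖B̃‖+1))}`, then `(Ã+E, B̃+F) ∉ Orb_Ψ(A,B)`. -/
theorem perturbation_not_in_orbit (A A' B B' E F : Matrix (Fin 2) (Fin 2) ℂ)
    (hA : IsUnit A) (hA' : IsUnit A') (hB : IsUnit B) (hB' : IsUnit B')
    (hBs : B.IsSymm) (hB's : B'.IsSymm) (hFs : F.IsSymm)
    (hp : ‖A'.det‖ * ‖B.det‖ - ‖B'.det‖ * ‖A.det‖ ≠ 0)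
    (hE : maxNorm E < min 1 (|‖A'.det‖ * ‖B.det‖ - ‖B'.det‖ * ‖A.det‖| /
        (4 * ‖B.det‖ * (2 * maxNorm A' + 1))))
    (hF : maxNorm F < min 1 (|‖A'.det‖ * ‖B.det‖ - ‖B'.det‖ * ‖A.det‖| /
        (4 * ‖A.det‖ * (2 * maxNorm B' + 1)))) :
    ¬ ∃ (c : ℂ) (P : Matrix (Fin 2) (Fin 2) ℂ), ‖c‖ = 1 ∧ IsUnit P ∧
        c • (Pᴴ * A * P) = A' + E ∧ Pᵀ * B * P = B' + F := by
  rintro ⟨c, P, hc, hP, h1, h2⟩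
  set p : ℝ := ‖A'.det‖ * ‖B.det‖ - ‖B'.det‖ * ‖A.det‖ with hpdef
  have hdA : A.det ≠ 0 := (Matrix.isUnit_iff_isUnit_det A).mp hA |>.ne_zero
  have hdB : B.det ≠ 0 := (Matrix.isUnit_iff_isUnit_det B).mp hB |>.ne_zero
  have hbd : (0:ℝ) < ‖B.det‖ := norm_pos_iff.mpr hdB
  have had : (0:ℝ) < ‖A.det‖ := norm_pos_iff.mpr hdA
  -- determinant relations
  have e1 : (A' + E).det = c ^ 2 * (star P.det * (A.det * P.det)) := by
    rw [← h1, Matrix.det_smul, Matrix.det_mul, Matrix.det_mul, Matrix.det_conjTranspose]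
    simp [Fintype.card_fin]
    exact Or.inl (mul_assoc _ _ _)
  have e2 : (B' + F).det = P.det * (B.det * P.det) := by
    rw [← h2, Matrix.det_mul, Matrix.det_mul, Matrix.det_transpose, mul_assoc]
  have n1 : ‖(A' + E).det‖ = ‖P.det‖ ^ 2 * ‖A.det‖ := by
    rw [e1]; simp [norm_mul, norm_pow, hc]; ring
  have n2 : ‖(B' + F).det‖ = ‖P.det‖ ^ 2 * ‖B.det‖ := by
    rw [e2]; simp [norm_mul]; ring
  have key : ‖(A' + E).det‖ * ‖B.det‖ = ‖(B' + F).det‖ * ‖A.det‖ := by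
    rw [n1, n2]; ring
  -- perturbation bounds
  have hE1 : maxNorm E ≤ 1 := le_of_lt (lt_of_lt_of_le hE (min_le_left _ _))
  have hF1 : maxNorm F ≤ 1 := le_of_lt (lt_of_lt_of_le hF (min_le_left _ _))
  have hE2 : maxNorm E < |p| / (4 * ‖B.det‖ * (2 * maxNorm A' + 1)) :=
    lt_of_lt_of_le hE (min_le_right _ _)
  have hF2 : maxNorm F < |p| / (4 * ‖A.det‖ * (2 * maxNorm B' + 1)) :=
    lt_of_lt_of_le hF (min_le_right _ _)
  have hA'0 := maxNorm_nonneg A'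
  have hB'0 := maxNorm_nonneg B'
  have hE0 := maxNorm_nonneg E
  have hF0 := maxNorm_nonneg F
  have d1 : ‖(A' + E).det - A'.det‖ ≤ 2 * maxNorm E * (2 * maxNorm A' + 1) :=
    det_perturb A' E hE1
  have d2 : ‖(B' + F).det - B'.det‖ ≤ 2 * maxNorm F * (2 * maxNorm B' + 1) :=
    det_perturb B' F hF1
  have pos1 : (0:ℝ) < 4 * ‖B.det‖ * (2 * maxNorm A' + 1) := by positivity
  have pos2 : (0:ℝ) < 4 * ‖A.det‖ * (2 * maxNorm B' + 1) := by positivity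
  have hE3 : maxNorm E * (4 * ‖B.det‖ * (2 * maxNorm A' + 1)) < |p| :=
    (lt_div_iff₀ pos1).mp hE2
  have hF3 : maxNorm F * (4 * ‖A.det‖ * (2 * maxNorm B' + 1)) < |p| :=
    (lt_div_iff₀ pos2).mp hF2
  set x : ℝ := ‖(A' + E).det‖ - ‖A'.det‖ with hx
  set y : ℝ := ‖(B' + F).det‖ - ‖B'.det‖ with hy
  have ax : |x| ≤ ‖(A' + E).det - A'.det‖ := abs_norm_sub_norm_le _ _
  have ay : |y| ≤ ‖(B' + F).det - B'.det‖ := abs_norm_sub_norm_le _ _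
  have hpeq : p = y * ‖A.det‖ - x * ‖B.det‖ := by
    rw [hpdef, hx, hy]
    nlinarith [key]
  have habs : |p| ≤ |y| * ‖A.det‖ + |x| * ‖B.det‖ := by
    rw [hpeq]
    calc |y * ‖A.det‖ - x * ‖B.det‖| ≤ |y * ‖A.det‖| + |x * ‖B.det‖| := by
          have := abs_add_le (y * ‖A.det‖) (-(x * ‖B.det‖))
          simpa [sub_eq_add_neg, abs_neg] using this
      _ = |y| * ‖A.det‖ + |x| * ‖B.det‖ := by
          rw [abs_mul, abs_mul, abs_of_pos had, abs_of_pos hbd]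
  have hpx : |x| * ‖B.det‖ < |p| / 2 := by nlinarith
  have hpy : |y| * ‖A.det‖ < |p| / 2 := by nlinarith
  linarith
end

section
/- For every τ with 0 ≤ τ ≤ 1, the matrix diag(1,0) lies in the closure of the Ψ₁-orbit {c·P*·M(τ)·P : |c| = 1, P ∈ GL₂(ℂ)} of the matrix M(τ) with rows (0,1) and (τ,0). Moreover, the matrix diag(1,−1) lies in the closure of the Ψ₁-orbit of the matrix N with rows (0,1) and (1,i). -/
/-!
Each limit point is reached along an explicit curve in the orbit. For `a = (1 + τ)^(-1/2)`
congruence by `[[a, 0], [a, δ]]` sends `M(τ)` to `diag(1, 0) + δ • [[0, a], [τ a, 0]]`, and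
congruence by `[[1/(2ε), 1/(2ε)], [ε, -ε]]` sends `N` to `diag(1, -1) + ε² • [[i, -i], [-i, i]]`;
letting `δ, ε → 0` gives the two limits.
-/

open Matrix Filter Topology

def psiOrbit {n : Type*} [Fintype n] [DecidableEq n] (A : Matrix n n ℂ) :
    Set (Matrix n n ℂ) :=
  {X | ∃ (c : ℂ) (P : Matrix n n ℂ), ‖c‖ = 1 ∧ IsUnit P ∧ X = c • (Pᴴ * A * P)}

lemma conjTranspose_mul_mul_mem_psiOrbit {n : Type*} [Fintype n] [DecidableEq n]
    (A : Matrix n n ℂ) {P : Matrix n n ℂ} (hP : IsUnit P) : Pᴴ * A * P ∈ psiOrbit A :=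
  ⟨1, P, norm_one, hP, (one_smul ℂ _).symm⟩

lemma mem_closure_of_forall_pos_add_smul_mem {E : Type*} [TopologicalSpace E]
    [AddCommMonoid E] [Module ℝ E] [ContinuousAdd E] [ContinuousSMul ℝ E]
    {s : Set E} {x v : E} (h : ∀ δ : ℝ, 0 < δ → x + δ • v ∈ s) : x ∈ closure s := by
  have hlim : Tendsto (fun δ : ℝ => x + δ • v) (𝓝[>] 0) (𝓝 x) := by
    have hcont : Continuous fun δ : ℝ => x + δ • v := by fun_prop
    simpa using (hcont.tendsto 0).mono_left nhdsWithin_le_nhds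
  exact mem_closure_of_tendsto hlim (eventually_nhdsWithin_of_forall h)

lemma diagonal_one_zero_add_smul_mem_psiOrbit {τ a : ℝ} (ha : a ^ 2 * (1 + τ) = 1)
    {δ : ℝ} (hδ : δ ≠ 0) :
    diagonal ![(1 : ℂ), 0] + δ • !![0, (a : ℂ); τ * a, 0] ∈
      psiOrbit !![(0 : ℂ), 1; (τ : ℂ), 0] := by
  have ha0 : a ≠ 0 := by rintro rfl; simp at ha
  have hP : IsUnit !![(a : ℂ), 0; a, δ] := by
    simp [isUnit_iff_isUnit_det, det_fin_two_of, ha0, hδ]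
  convert conjTranspose_mul_mul_mem_psiOrbit _ hP using 1
  have ha' : (a : ℂ) ^ 2 * (1 + τ) = 1 := by exact_mod_cast ha
  ext i j
  fin_cases i <;> fin_cases j <;>
    simp [mul_apply, Fin.sum_univ_two, conjTranspose_apply, Complex.real_smul]
  · linear_combination -ha'
  all_goals ring

lemma diagonal_one_neg_one_add_smul_mem_psiOrbit {δ : ℝ} (hδ : 0 < δ) :
    diagonal ![(1 : ℂ), -1] + δ • !![Complex.I, -Complex.I; -Complex.I, Complex.I] ∈
      psiOrbit !![(0 : ℂ), 1; 1, Complex.I] := by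
  obtain ⟨ε, hε, rfl⟩ : ∃ ε : ℝ, ε ≠ 0 ∧ ε ^ 2 = δ :=
    ⟨√δ, (Real.sqrt_pos.2 hδ).ne', Real.sq_sqrt hδ.le⟩
  have hε' : (ε : ℂ) ≠ 0 := by exact_mod_cast hε
  have hP : IsUnit !![(2 * ε : ℂ)⁻¹, (2 * ε : ℂ)⁻¹; ε, -ε] := by
    rw [isUnit_iff_isUnit_det, det_fin_two_of]
    convert (isUnit_one (M := ℂ)).neg using 1
    field_simp
    ring
  convert conjTranspose_mul_mul_mem_psiOrbit _ hP using 1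
  ext i j
  fin_cases i <;> fin_cases j <;>
    simp [mul_apply, Fin.sum_univ_two, conjTranspose_apply, Complex.real_smul,
      map_ofNat] <;>
    field_simp <;> ring

theorem closure_orbit_paths_general (τ : ℝ) (h0 : 0 ≤ τ) :
    ((Matrix.diagonal ![(1 : ℂ), 0]) ∈ closure {X : Matrix (Fin 2) (Fin 2) ℂ |
        ∃ (c : ℂ) (P : Matrix (Fin 2) (Fin 2) ℂ), ‖c‖ = 1 ∧ IsUnit P ∧
          X = c • (Pᴴ * !![(0 : ℂ), 1; (τ : ℂ), 0] * P)}) ∧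
    ((Matrix.diagonal ![(1 : ℂ), -1]) ∈ closure {X : Matrix (Fin 2) (Fin 2) ℂ |
        ∃ (c : ℂ) (P : Matrix (Fin 2) (Fin 2) ℂ), ‖c‖ = 1 ∧ IsUnit P ∧
          X = c • (Pᴴ * !![(0 : ℂ), 1; 1, Complex.I] * P)}) := by
  have ha : (√(1 + τ))⁻¹ ^ 2 * (1 + τ) = 1 := by
    rw [inv_pow, Real.sq_sqrt (by linarith)]
    exact inv_mul_cancel₀ (by linarith)
  exact ⟨mem_closure_of_forall_pos_add_smul_mem fun δ hδ =>
      diagonal_one_zero_add_smul_mem_psiOrbit ha hδ.ne',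
    mem_closure_of_forall_pos_add_smul_mem fun δ hδ =>
      diagonal_one_neg_one_add_smul_mem_psiOrbit hδ⟩

/-- For `0 ≤ τ ≤ 1`, the matrix `diag(1,0)` lies in the closure of the
`Ψ₁`-orbit of `M(τ) = [[0,1],[τ,0]]`; moreover `diag(1,−1)` lies in the closure of the
`Ψ₁`-orbit of `N = [[0,1],[1,i]]`. -/
theorem closure_orbit_paths (τ : ℝ) (h0 : 0 ≤ τ) (h1 : τ ≤ 1) :
    ((Matrix.diagonal ![(1 : ℂ), 0]) ∈ closure {X : Matrix (Fin 2) (Fin 2) ℂ |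
        ∃ (c : ℂ) (P : Matrix (Fin 2) (Fin 2) ℂ), ‖c‖ = 1 ∧ IsUnit P ∧
          X = c • (Pᴴ * !![(0 : ℂ), 1; (τ : ℂ), 0] * P)}) ∧
    ((Matrix.diagonal ![(1 : ℂ), -1]) ∈ closure {X : Matrix (Fin 2) (Fin 2) ℂ |
        ∃ (c : ℂ) (P : Matrix (Fin 2) (Fin 2) ℂ), ‖c‖ = 1 ∧ IsUnit P ∧
          X = c • (Pᴴ * !![(0 : ℂ), 1; 1, Complex.I] * P)}) :=
  closure_orbit_paths_general τ h0
end

section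
/- Let 0 ≤ τ < 1, let N be the 2×2 complex matrix with rows (0,1) and (1,i), and let M(τ) be the 2×2 matrix with rows (0,1) and (τ,0). Then for every c ∈ ℂ with |c| = 1 and every P ∈ GL₂(ℂ) one has ‖c·P*NP − M(τ)‖ ≥ (1−τ)/4 in the entrywise maximum norm. In particular, M(τ) does not lie in the closure of the Ψ₁-orbit of N. -/
/-!
For `‖c‖ = 1` the skew part `K = c̄ • A - c • Aᴴ` of `A = c • Pᴴ N P` is
`Pᴴ (N - Nᴴ) P = 2i • v* v`, where `v` is the second row of `P`; being a rank-one Gram matrix, its entries satisfy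
`|K₀₁|² = |K₀₀| |K₁₁|`. If `‖A - M(τ)‖ = ε`, the skew part of `A` is entrywise within `2ε` of that
of `M(τ)`, whose diagonal vanishes and whose `(0,1)` entry `c̄ - cτ` has modulus at least `1 - τ`.
Hence `1 - τ - 2ε ≤ |K₀₁| ≤ 2ε`.
-/

open Matrix

section EntrywiseSupNorm

attribute [local instance] Matrix.normedAddCommGroup

theorem maxNorm_eq_norm {n : ℕ} (X : Matrix (Fin n) (Fin n) ℂ) : maxNorm X = ‖X‖ := by
  rw [maxNorm, Matrix.norm_eq_sup_sup_nnnorm, ← Finset.univ_product_univ,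
    Finset.sup_product_left]

theorem norm_entry_le_maxNorm {n : ℕ} (X : Matrix (Fin n) (Fin n) ℂ) (j k : Fin n) :
    ‖X j k‖ ≤ maxNorm X :=
  maxNorm_eq_norm X ▸ X.norm_entry_le_entrywise_sup_norm

theorem continuous_maxNorm {n : ℕ} : Continuous (maxNorm (n := n)) := by
  rw [funext maxNorm_eq_norm]
  exact continuous_norm

theorem notMem_closure_of_forall_le_maxNorm_sub {n : ℕ} {S : Set (Matrix (Fin n) (Fin n) ℂ)}
    {M : Matrix (Fin n) (Fin n) ℂ} {δ : ℝ} (hδ : 0 < δ) (h : ∀ X ∈ S, δ ≤ maxNorm (X - M)) :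
    M ∉ closure S := by
  intro hM
  have hclosed : IsClosed {X | δ ≤ maxNorm (X - M)} :=
    isClosed_le continuous_const (continuous_maxNorm.comp (continuous_id.sub continuous_const))
  have : δ ≤ maxNorm (M - M) := closure_minimal h hclosed hM
  rw [sub_self, maxNorm_eq_norm, norm_zero] at this
  exact hδ.not_ge this

end EntrywiseSupNorm

theorem star_smul_sub_smul_conjTranspose_of_norm_eq_one {n : Type*} [Fintype n] {c : ℂ}
    (hc : ‖c‖ = 1) (N P : Matrix n n ℂ) :
    star c • (c • (Pᴴ * N * P)) - c • (c • (Pᴴ * N * P))ᴴ = Pᴴ * (N - Nᴴ) * P := by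
  have hcc : star c * c = 1 := by simpa [hc] using Complex.conj_mul' c
  rw [conjTranspose_smul, conjTranspose_mul, conjTranspose_mul, conjTranspose_conjTranspose,
    smul_smul, smul_smul, mul_comm c, hcc, one_smul, one_smul, Matrix.mul_sub, Matrix.sub_mul,
    Matrix.mul_assoc, Matrix.mul_assoc]

theorem norm_star_smul_sub_smul_conjTranspose_apply_le {n : ℕ} {c : ℂ} (hc : ‖c‖ = 1)
    (D : Matrix (Fin n) (Fin n) ℂ) (j k : Fin n) :
    ‖(star c • D - c • Dᴴ) j k‖ ≤ 2 * maxNorm D := by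
  calc ‖(star c • D - c • Dᴴ) j k‖ ≤ ‖star c * D j k‖ + ‖c * star (D k j)‖ := by
        simpa only [Matrix.sub_apply, Matrix.smul_apply, conjTranspose_apply, smul_eq_mul] using
          norm_sub_le (star c * D j k) (c * star (D k j))
    _ = ‖D j k‖ + ‖D k j‖ := by simp [hc]
    _ ≤ 2 * maxNorm D := by
        linarith [norm_entry_le_maxNorm D j k, norm_entry_le_maxNorm D k j]

theorem norm_vecMulVec_star_apply_sq {n : Type*} (v : n → ℂ) (j k : n) :
    ‖vecMulVec (star v) v j k‖ ^ 2 = ‖vecMulVec (star v) v j j‖ * ‖vecMulVec (star v) v k k‖ := by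
  simp only [vecMulVec_apply, Pi.star_apply, norm_mul, norm_star]
  ring

theorem conjTranspose_mul_mul_eq_smul_vecMulVec (a : ℂ) (P : Matrix (Fin 2) (Fin 2) ℂ) :
    Pᴴ * !![0, 0; 0, a] * P = a • vecMulVec (star (P 1)) (P 1) := by
  ext j k
  simp [Matrix.mul_apply, Fin.sum_univ_two, vecMulVec_apply]
  ring

theorem matrixN_sub_conjTranspose :
    !![(0 : ℂ), 1; 1, Complex.I] - !![(0 : ℂ), 1; 1, Complex.I]ᴴ = !![0, 0; 0, 2 * Complex.I] := by
  ext j k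
  fin_cases j <;> fin_cases k <;> simp [two_mul]

theorem one_sub_le_norm_star_sub_mul_ofReal {τ : ℝ} (h0 : 0 ≤ τ) {c : ℂ} (hc : ‖c‖ = 1) :
    1 - τ ≤ ‖star c - c * τ‖ := by
  have := norm_sub_norm_le (star c) (c * τ)
  rwa [norm_star, norm_mul, hc, Complex.norm_real, Real.norm_of_nonneg h0, one_mul] at this

theorem one_sub_div_four_le_maxNorm {τ : ℝ} (h0 : 0 ≤ τ) {c : ℂ} (hc : ‖c‖ = 1)
    (P : Matrix (Fin 2) (Fin 2) ℂ) :
    (1 - τ) / 4 ≤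
      maxNorm (c • (Pᴴ * !![(0 : ℂ), 1; 1, Complex.I] * P) - !![(0 : ℂ), 1; (τ : ℂ), 0]) := by
  generalize hD : c • (Pᴴ * !![(0 : ℂ), 1; 1, Complex.I] * P) - !![(0 : ℂ), 1; (τ : ℂ), 0] = D
  have hskew : (star c • !![(0 : ℂ), 1; (τ : ℂ), 0] - c • !![(0 : ℂ), 1; (τ : ℂ), 0]ᴴ) +
      (star c • D - c • Dᴴ) = (2 * Complex.I) • vecMulVec (star (P 1)) (P 1) := by
    rw [← conjTranspose_mul_mul_eq_smul_vecMulVec, ← matrixN_sub_conjTranspose,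
      ← star_smul_sub_smul_conjTranspose_of_norm_eq_one hc, ← hD, conjTranspose_sub, smul_sub,
      smul_sub]
    abel
  have hdev (j k : Fin 2) : ‖((2 * Complex.I) • vecMulVec (star (P 1)) (P 1) -
      (star c • !![(0 : ℂ), 1; (τ : ℂ), 0] - c • !![(0 : ℂ), 1; (τ : ℂ), 0]ᴴ)) j k‖ ≤
        2 * maxNorm D := by
    rw [← hskew, add_sub_cancel_left]
    exact norm_star_smul_sub_smul_conjTranspose_apply_le hc D j k
  have h00 := hdev 0 0
  have h11 := hdev 1 1
  have h01 := hdev 0 1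
  simp only [Matrix.sub_apply, Matrix.smul_apply, conjTranspose_apply, of_apply, cons_val',
    cons_val_zero, cons_val_one, empty_val', cons_val_fin_one, smul_eq_mul, star_zero, mul_zero,
    sub_zero, norm_mul, Complex.norm_two, Complex.norm_I, mul_one,
    show star (τ : ℂ) = τ from Complex.conj_ofReal τ] at h00 h11 h01
  set V := vecMulVec (star (P 1)) (P 1)
  have hε : 0 ≤ maxNorm D := by linarith [norm_nonneg (V 0 0)]
  have hV01 : ‖V 0 1‖ ≤ maxNorm D := by
    have hsq : ‖V 0 1‖ ^ 2 ≤ maxNorm D ^ 2 := by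
      rw [norm_vecMulVec_star_apply_sq, sq]
      exact mul_le_mul (by linarith) (by linarith) (norm_nonneg _) hε
    exact (pow_le_pow_iff_left₀ (norm_nonneg _) hε two_ne_zero).mp hsq
  have := norm_sub_norm_le (star c - c * τ) (2 * Complex.I * V 0 1)
  rw [norm_mul, norm_mul, Complex.norm_two, Complex.norm_I, mul_one] at this
  rw [norm_sub_rev] at h01
  linarith [one_sub_le_norm_star_sub_mul_ofReal h0 hc]

/-- For `0 ≤ τ < 1`, `N = [[0,1],[1,i]]` and `M(τ) = [[0,1],[τ,0]]`, one has
`‖c·P*NP − M(τ)‖ ≥ (1−τ)/4` for every `|c| = 1` and `P ∈ GL₂(ℂ)`; in particular `M(τ)`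
does not lie in the closure of the `Ψ₁`-orbit of `N`. -/
theorem M_tau_far_from_orbit_of_N (τ : ℝ) (h0 : 0 ≤ τ) (h1 : τ < 1) :
    (∀ (c : ℂ) (P : Matrix (Fin 2) (Fin 2) ℂ), ‖c‖ = 1 → IsUnit P →
      (1 - τ) / 4 ≤ maxNorm (c • (Pᴴ * !![(0 : ℂ), 1; 1, Complex.I] * P) -
        !![(0 : ℂ), 1; (τ : ℂ), 0])) ∧
    (!![(0 : ℂ), 1; (τ : ℂ), 0]) ∉ closure {X : Matrix (Fin 2) (Fin 2) ℂ |
        ∃ (c : ℂ) (P : Matrix (Fin 2) (Fin 2) ℂ), ‖c‖ = 1 ∧ IsUnit P ∧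
          X = c • (Pᴴ * !![(0 : ℂ), 1; 1, Complex.I] * P)} := by
  refine ⟨fun c P hc _ => one_sub_div_four_le_maxNorm h0 hc P,
    notMem_closure_of_forall_le_maxNorm_sub (δ := (1 - τ) / 4) (by linarith) ?_⟩
  rintro X ⟨c, P, hc, -, rfl⟩
  exact one_sub_div_four_le_maxNorm h0 hc P
end

section
/- Let 0 < θ < π and set A = diag(1, e^{iθ}). Let B and B̃ be symmetric 2×2 complex matrices with entries B = [[a,b],[b,d]] and B̃ = [[ã,b̃],[b̃,d̃]]. If (|a|,|b|,|d|) ≠ (|ã|,|b̃|,|d̃|), i.e. at least one of the quantities ||a|−|ã||, ||b|−|b̃||, ||d|−|d̃|| is nonzero, then the pair (A, B̃) does not lie in the closure of the orbit Orb_Ψ(A, B) = {(c·P*AP, PᵀBP) : c ∈ ℂ, |c| = 1, P ∈ GL₂(ℂ)}. -/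
open Matrix

open Filter Topology


private instance matFC : FirstCountableTopology (Matrix (Fin 2) (Fin 2) ℂ) :=
  inferInstanceAs (FirstCountableTopology (Fin 2 → Fin 2 → ℂ))

private lemma tendsto_norm_of_sq_tendsto {g : ℕ → ℂ} {L : ℝ}
    (h : Filter.Tendsto (fun n => ‖g n‖ ^ 2) atTop (𝓝 L)) :
    Filter.Tendsto (fun n => ‖g n‖) atTop (𝓝 (Real.sqrt L)) := by
  have h2 := (Real.continuous_sqrt.tendsto _).comp h
  have : (fun n => Real.sqrt (‖g n‖ ^ 2)) = fun n => ‖g n‖ :=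
    funext fun n => Real.sqrt_sq (norm_nonneg _)
  rwa [Function.comp_def, this] at h2

private lemma tendsto_zero_of_normsq {g : ℕ → ℂ}
    (h : Filter.Tendsto (fun n => ‖g n‖ ^ 2) atTop (𝓝 0)) :
    Filter.Tendsto g atTop (𝓝 0) :=
  tendsto_zero_iff_norm_tendsto_zero.mpr (by simpa using tendsto_norm_of_sq_tendsto h)

private lemma core (co : ℝ) (hco : |co| < 1)
    (X Y Z W : ℕ → ℝ) (hX : ∀ n, 0 ≤ X n) (hY : ∀ n, 0 ≤ Y n)
    (hZ : ∀ n, 0 ≤ Z n) (hW : ∀ n, 0 ≤ W n)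
    (h1 : Tendsto (fun n => X n * W n - Y n * Z n) atTop (𝓝 1))
    (h2 : Tendsto (fun n => X n * Z n + Y n * W n + co * (Y n * Z n + X n * W n)) atTop (𝓝 co))
    (h3 : Tendsto (fun n => X n ^ 2 + Y n ^ 2 + 2 * co * (X n * Y n)) atTop (𝓝 1))
    (h4 : Tendsto (fun n => Z n ^ 2 + W n ^ 2 + 2 * co * (Z n * W n)) atTop (𝓝 1)) :
    Tendsto X atTop (𝓝 1) ∧ Tendsto Y atTop (𝓝 0) ∧
      Tendsto Z atTop (𝓝 0) ∧ Tendsto W atTop (𝓝 1) := by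
  have hco1 : 0 < 1 + co := by cases abs_lt.mp hco; linarith
  have hco2 : 0 < 1 - |co| := by linarith
  have hE : Tendsto (fun n => X n * Z n + Y n * W n + 2 * co * (Y n * Z n)) atTop (𝓝 0) := by
    have := h2.sub (h1.const_mul co)
    simp only [mul_one] at this
    convert this using 2 with n
    · ring
    · ring
  have hD : ∀ᶠ n in atTop, (0:ℝ) ≤ X n * W n - Y n * Z n :=
    h1.eventually (eventually_ge_nhds (by norm_num))
  have hYZ : Tendsto (fun n => Y n * Z n) atTop (𝓝 0) := by
    apply squeeze_zero' (Eventually.of_forall fun n => mul_nonneg (hY n) (hZ n))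
      (g := fun n => (X n * Z n + Y n * W n + 2 * co * (Y n * Z n)) / (2 * (1 + co)))
    · filter_upwards [hD] with n hDn
      rw [le_div_iff₀ (by linarith)]
      nlinarith [sq_nonneg (X n * Z n - Y n * W n), sq_nonneg (X n * Z n + Y n * W n - 2 * (Y n * Z n)),
        mul_nonneg (hX n) (hZ n), mul_nonneg (hY n) (hW n), mul_nonneg (hY n) (hZ n),
        mul_nonneg (mul_nonneg (hX n) (hZ n)) (mul_nonneg (hY n) (hW n))]
    · simpa using hE.div_const (2 * (1 + co))
  have hXW : Tendsto (fun n => X n * W n) atTop (𝓝 1) := by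
    have := h1.add hYZ
    simp only [add_zero] at this
    convert this using 2 with n; ring
  have hXZYW : Tendsto (fun n => X n * Z n + Y n * W n) atTop (𝓝 0) := by
    have := hE.sub ((hYZ.const_mul (2*co)))
    simp only [mul_zero, sub_zero] at this
    convert this using 2 with n; ring
  have hXZ : Tendsto (fun n => X n * Z n) atTop (𝓝 0) := by
    apply squeeze_zero' (Eventually.of_forall fun n => mul_nonneg (hX n) (hZ n))
      (Eventually.of_forall fun n => ?_) hXZYW
    nlinarith [mul_nonneg (hY n) (hW n)]
  have hYW : Tendsto (fun n => Y n * W n) atTop (𝓝 0) := by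
    apply squeeze_zero' (Eventually.of_forall fun n => mul_nonneg (hY n) (hW n))
      (Eventually.of_forall fun n => ?_) hXZYW
    nlinarith [mul_nonneg (hX n) (hZ n)]
  set M : ℝ := Real.sqrt (2 / (1 - |co|)) with hM
  have hMpos : 0 < M := Real.sqrt_pos.mpr (by positivity)
  have hb3 : ∀ᶠ n in atTop, X n ^ 2 + Y n ^ 2 + 2 * co * (X n * Y n) ≤ 2 :=
    h3.eventually (eventually_le_nhds (by norm_num))
  have hb4 : ∀ᶠ n in atTop, Z n ^ 2 + W n ^ 2 + 2 * co * (Z n * W n) ≤ 2 :=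
    h4.eventually (eventually_le_nhds (by norm_num))
  have bound : ∀ (u v : ℝ), 0 ≤ u → 0 ≤ v → u ^ 2 + v ^ 2 + 2 * co * (u * v) ≤ 2 → u ≤ M := by
    intro u v hu hv h
    have h2' : (1 - |co|) * (u ^ 2 + v ^ 2) ≤ 2 := by
      have habs : |2 * co * (u*v)| ≤ |co| * (u^2+v^2) := by
        rw [abs_mul, abs_mul, abs_of_nonneg (mul_nonneg hu hv), abs_two]
        nlinarith [sq_nonneg (u - v), abs_nonneg co]
      have := neg_abs_le (2 * co * (u*v))
      nlinarith
    have hu2 : u ^ 2 ≤ 2 / (1 - |co|) := by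
      rw [le_div_iff₀ hco2]
      nlinarith [sq_nonneg v]
    calc u = Real.sqrt (u^2) := (Real.sqrt_sq hu).symm
    _ ≤ M := Real.sqrt_le_sqrt hu2
  have hXM : ∀ᶠ n in atTop, X n ≤ M := by
    filter_upwards [hb3] with n h; exact bound _ _ (hX n) (hY n) h
  have hWM : ∀ᶠ n in atTop, W n ≤ M := by
    filter_upwards [hb4] with n h
    refine bound _ _ (hW n) (hZ n) ?_; linarith [h]
  have hXWhalf : ∀ᶠ n in atTop, (1:ℝ)/2 ≤ X n * W n :=
    hXW.eventually (eventually_ge_nhds (by norm_num))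
  have hXlb : ∀ᶠ n in atTop, 1 / (2*M) ≤ X n := by
    filter_upwards [hXWhalf, hWM] with n h1n h2n
    rw [div_le_iff₀ (by positivity)]
    nlinarith [hX n, hW n]
  have hWlb : ∀ᶠ n in atTop, 1 / (2*M) ≤ W n := by
    filter_upwards [hXWhalf, hXM] with n h1n h2n
    rw [div_le_iff₀ (by positivity)]
    nlinarith [hX n, hW n]
  have hY0 : Tendsto Y atTop (𝓝 0) := by
    apply squeeze_zero' (Eventually.of_forall hY) (g := fun n => 2 * M * (Y n * W n)) ?_
      (by simpa using hYW.const_mul (2*M))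
    filter_upwards [hWlb] with n hn
    have h' : 1/(2*M) * Y n ≤ W n * Y n := mul_le_mul_of_nonneg_right hn (hY n)
    calc Y n = 2*M * (1/(2*M) * Y n) := by field_simp
    _ ≤ 2*M * (Y n * W n) := by
        apply mul_le_mul_of_nonneg_left _ (by positivity)
        linarith [h']
  have hZ0 : Tendsto Z atTop (𝓝 0) := by
    apply squeeze_zero' (Eventually.of_forall hZ) (g := fun n => 2 * M * (X n * Z n)) ?_
      (by simpa using hXZ.const_mul (2*M))
    filter_upwards [hXlb] with n hn
    have h' : 1/(2*M) * Z n ≤ X n * Z n := mul_le_mul_of_nonneg_right hn (hZ n)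
    calc Z n = 2*M * (1/(2*M) * Z n) := by field_simp
    _ ≤ 2*M * (X n * Z n) := by
        apply mul_le_mul_of_nonneg_left _ (by positivity)
        linarith [h']
  have hXY : Tendsto (fun n => X n * Y n) atTop (𝓝 0) := by
    apply squeeze_zero' (Eventually.of_forall fun n => mul_nonneg (hX n) (hY n))
      (g := fun n => M * Y n) ?_ (by simpa using hY0.const_mul M)
    filter_upwards [hXM] with n hn
    exact mul_le_mul_of_nonneg_right hn (hY n)
  have hZW : Tendsto (fun n => Z n * W n) atTop (𝓝 0) := by
    apply squeeze_zero' (Eventually.of_forall fun n => mul_nonneg (hZ n) (hW n))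
      (g := fun n => M * Z n) ?_ (by simpa using hZ0.const_mul M)
    filter_upwards [hWM] with n hn
    calc Z n * W n = W n * Z n := mul_comm _ _
    _ ≤ M * Z n := mul_le_mul_of_nonneg_right hn (hZ n)
  have hX2 : Tendsto (fun n => X n ^ 2) atTop (𝓝 1) := by
    have := (h3.sub (hY0.pow 2)).sub (hXY.const_mul (2*co))
    simp only [mul_zero, sub_zero] at this
    norm_num at this
    convert this using 2 with n; ring
  have hX1 : Tendsto X atTop (𝓝 1) := by
    have h' : Tendsto (fun n => Real.sqrt (X n ^ 2)) atTop (𝓝 (Real.sqrt 1)) :=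
      (Real.continuous_sqrt.tendsto _).comp hX2
    simpa [Real.sqrt_one, Real.sqrt_sq (hX _)] using h'
  have hW2 : Tendsto (fun n => W n ^ 2) atTop (𝓝 1) := by
    have := (h4.sub (hZ0.pow 2)).sub (hZW.const_mul (2*co))
    simp only [mul_zero, sub_zero] at this
    norm_num at this
    convert this using 2 with n; ring
  have hW1 : Tendsto W atTop (𝓝 1) := by
    have h' : Tendsto (fun n => Real.sqrt (W n ^ 2)) atTop (𝓝 (Real.sqrt 1)) :=
      (Real.continuous_sqrt.tendsto _).comp hW2
    simpa [Real.sqrt_one, Real.sqrt_sq (hW _)] using h'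
  exact ⟨hX1, hY0, hZ0, hW1⟩

/-- Let `0 < θ < π`, `A = diag(1, e^{iθ})`, `B = [[a,b],[b,d]]` and
`B̃ = [[ã,b̃],[b̃,d̃]]` symmetric. If `(|a|,|b|,|d|) ≠ (|ã|,|b̃|,|d̃|)`, then `(A, B̃)` does
not lie in the closure of the orbit `Orb_Ψ(A, B)`. -/
theorem not_in_closure_orbit_of_moduli_ne (θ : ℝ) (hθ0 : 0 < θ) (hθπ : θ < Real.pi)
    (a b d a' b' d' : ℂ)
    (hne : ¬ (‖a‖ = ‖a'‖ ∧ ‖b‖ = ‖b'‖ ∧ ‖d‖ = ‖d'‖)) :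
    (Matrix.diagonal ![(1 : ℂ), Complex.exp (θ * Complex.I)], !![a', b'; b', d']) ∉
      closure {x : Matrix (Fin 2) (Fin 2) ℂ × Matrix (Fin 2) (Fin 2) ℂ |
        ∃ (c : ℂ) (P : Matrix (Fin 2) (Fin 2) ℂ), ‖c‖ = 1 ∧ IsUnit P ∧
          x = (c • (Pᴴ * Matrix.diagonal ![(1 : ℂ), Complex.exp (θ * Complex.I)] * P),
               Pᵀ * !![a, b; b, d] * P)} := by
  intro h
  rw [mem_closure_iff_seq_limit] at h
  obtain ⟨f, hf, hlim⟩ := h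
  choose c P hc hP hfe using hf
  set e : ℂ := Complex.exp (θ * Complex.I) with he
  set co : ℝ := Real.cos θ with hco
  set si : ℝ := Real.sin θ with hsi
  have here : e.re = co := Complex.exp_ofReal_mul_I_re θ
  have heim : e.im = si := Complex.exp_ofReal_mul_I_im θ
  have hsipos : 0 < si := Real.sin_pos_of_pos_of_lt_pi hθ0 hθπ
  have hpyth : co ^ 2 + si ^ 2 = 1 := by
    rw [hco, hsi]; exact Real.cos_sq_add_sin_sq θ
  have habse : ‖e‖ = 1 := Complex.norm_exp_ofReal_mul_I θ
  have hcolt : |co| < 1 := by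
    rw [abs_lt]; constructor <;> nlinarith
  -- entry limits
  have hlim1 : ∀ i j : Fin 2, Tendsto (fun n => (f n).1 i j) atTop
      (𝓝 ((Matrix.diagonal ![(1 : ℂ), e]) i j)) := by
    intro i j
    have hcont : Continuous (fun x : Matrix (Fin 2) (Fin 2) ℂ × Matrix (Fin 2) (Fin 2) ℂ =>
        x.1 i j) := (continuous_apply j).comp ((continuous_apply i).comp continuous_fst)
    exact (hcont.tendsto _).comp hlim
  have hlim2 : ∀ i j : Fin 2, Tendsto (fun n => (f n).2 i j) atTop
      (𝓝 ((!![a', b'; b', d']) i j)) := by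
    intro i j
    have hcont : Continuous (fun x : Matrix (Fin 2) (Fin 2) ℂ × Matrix (Fin 2) (Fin 2) ℂ =>
        x.2 i j) := (continuous_apply j).comp ((continuous_apply i).comp continuous_snd)
    exact (hcont.tendsto _).comp hlim
  -- entry formulas
  have hfst : ∀ n (i j : Fin 2), (f n).1 i j =
      c n * (starRingEnd ℂ (P n 0 i) * P n 0 j + e * (starRingEnd ℂ (P n 1 i) * P n 1 j)) := by
    intro n i j
    rw [hfe n]
    simp only [Matrix.smul_apply, smul_eq_mul]
    congr 1
    fin_cases i <;> fin_cases j <;>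
      · simp [Matrix.mul_apply, Fin.sum_univ_two, Matrix.diagonal]
        ring
  have hsnd : ∀ n (i j : Fin 2), (f n).2 i j =
      a * (P n 0 i * P n 0 j) + b * (P n 0 i * P n 1 j) + b * (P n 1 i * P n 0 j)
        + d * (P n 1 i * P n 1 j) := by
    intro n i j
    rw [hfe n]
    fin_cases i <;> fin_cases j <;>
      · simp [Matrix.mul_apply, Fin.sum_univ_two]
        ring
  -- real sequences
  set X : ℕ → ℝ := fun n => ‖P n 0 0‖ ^ 2 with hXdef
  set Y : ℕ → ℝ := fun n => ‖P n 1 0‖ ^ 2 with hYdef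
  set Z : ℕ → ℝ := fun n => ‖P n 0 1‖ ^ 2 with hZdef
  set W : ℕ → ℝ := fun n => ‖P n 1 1‖ ^ 2 with hWdef
  have hnormsq : ∀ z : ℂ, ((‖z‖ ^ 2 : ℝ) : ℂ) = starRingEnd ℂ z * z := by
    intro z
    rw [Complex.sq_norm, Complex.normSq_eq_conj_mul_self]
  -- u, v
  set u : ℕ → ℂ := fun n => (f n).1 0 0 with hudef
  set v : ℕ → ℂ := fun n => (f n).1 1 1 with hvdef
  have huf : ∀ n, u n = c n * ((X n : ℂ) + e * (Y n : ℂ)) := by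
    intro n
    rw [hudef]
    simp only
    rw [hfst n 0 0, hnormsq, hnormsq]
  have hvf : ∀ n, v n = c n * ((Z n : ℂ) + e * (W n : ℂ)) := by
    intro n
    rw [hvdef]
    simp only
    rw [hfst n 1 1, hnormsq, hnormsq]
  have hu : Tendsto u atTop (𝓝 1) := by
    have := hlim1 0 0
    simpa [Matrix.diagonal] using this
  have hv : Tendsto v atTop (𝓝 e) := by
    have := hlim1 1 1
    simpa [Matrix.diagonal] using this
  -- c n * conj (c n) = 1
  have hc1 : ∀ n, c n * starRingEnd ℂ (c n) = 1 := by
    intro n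
    rw [Complex.mul_conj]
    norm_cast
    rw [← Complex.sq_norm, hc n, one_pow]
  -- s
  set s : ℕ → ℂ := fun n => u n * starRingEnd ℂ (v n) with hsdef
  have hsf : ∀ n, s n = ((X n : ℂ) + e * (Y n : ℂ)) *
      ((Z n : ℂ) + starRingEnd ℂ e * (W n : ℂ)) := by
    intro n
    rw [hsdef]
    simp only
    rw [huf n, hvf n, _root_.map_mul, map_add, _root_.map_mul, Complex.conj_ofReal, Complex.conj_ofReal]
    calc c n * ((X n : ℂ) + e * (Y n : ℂ)) *
          (starRingEnd ℂ (c n) * ((Z n : ℂ) + starRingEnd ℂ e * (W n : ℂ)))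
        = (c n * starRingEnd ℂ (c n)) * (((X n : ℂ) + e * (Y n : ℂ)) *
          ((Z n : ℂ) + starRingEnd ℂ e * (W n : ℂ))) := by ring
      _ = _ := by rw [hc1 n, one_mul]
  have hs : Tendsto s atTop (𝓝 (starRingEnd ℂ e)) := by
    have := hu.mul ((Complex.continuous_conj.tendsto _).comp hv)
    simpa using this
  -- imaginary part
  have hsim : ∀ n, (s n).im = si * (Y n * Z n - X n * W n) := by
    intro n
    rw [hsf n]
    simp only [Complex.mul_im, Complex.add_im, Complex.add_re, Complex.mul_re, Complex.mul_im,
      Complex.ofReal_re, Complex.ofReal_im, Complex.conj_re, Complex.conj_im, here, heim]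
    ring
  have hsre : ∀ n, (s n).re = X n * Z n + Y n * W n + co * (Y n * Z n + X n * W n) := by
    intro n
    rw [hsf n]
    simp only [Complex.mul_re, Complex.add_im, Complex.add_re, Complex.mul_im,
      Complex.ofReal_re, Complex.ofReal_im, Complex.conj_re, Complex.conj_im, here, heim]
    linear_combination (Y n * W n) * hpyth
  -- h1 and h2 for core
  have hIm : Tendsto (fun n => si * (Y n * Z n - X n * W n)) atTop (𝓝 (-si)) := by
    have := (Complex.continuous_im.tendsto _).comp hs
    simp only [Function.comp_def, Complex.conj_im, heim] at this
    convert this using 2 with n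
    exact (hsim n).symm
  have h1 : Tendsto (fun n => X n * W n - Y n * Z n) atTop (𝓝 1) := by
    have := hIm.const_mul (-si⁻¹)
    have heq : (fun n => -si⁻¹ * (si * (Y n * Z n - X n * W n)))
        = fun n => X n * W n - Y n * Z n := by
      funext n
      field_simp
      ring
    rw [heq] at this
    convert this using 1
    field_simp
  have h2 : Tendsto (fun n => X n * Z n + Y n * W n + co * (Y n * Z n + X n * W n)) atTop
      (𝓝 co) := by
    have := (Complex.continuous_re.tendsto _).comp hs
    simp only [Function.comp_def, Complex.conj_re, here] at this
    convert this using 2 with n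
    exact (hsre n).symm
  -- norm identities
  have hnormu : ∀ n, ‖u n‖ ^ 2 = X n ^ 2 + Y n ^ 2 + 2 * co * (X n * Y n) := by
    intro n
    rw [huf n, norm_mul, hc n, one_mul, Complex.sq_norm,
      Complex.normSq_apply]
    simp only [Complex.add_re, Complex.add_im, Complex.mul_re, Complex.mul_im,
      Complex.ofReal_re, Complex.ofReal_im, here, heim]
    linear_combination (Y n ^ 2) * hpyth
  have hnormv : ∀ n, ‖v n‖ ^ 2 = Z n ^ 2 + W n ^ 2 + 2 * co * (Z n * W n) := by
    intro n
    rw [hvf n, norm_mul, hc n, one_mul, Complex.sq_norm,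
      Complex.normSq_apply]
    simp only [Complex.add_re, Complex.add_im, Complex.mul_re, Complex.mul_im,
      Complex.ofReal_re, Complex.ofReal_im, here, heim]
    linear_combination (W n ^ 2) * hpyth
  have h3 : Tendsto (fun n => X n ^ 2 + Y n ^ 2 + 2 * co * (X n * Y n)) atTop (𝓝 1) := by
    have := ((continuous_norm.tendsto _).comp hu).pow 2
    simp only [Function.comp_def, norm_one, one_pow] at this
    convert this using 2 with n
    exact (hnormu n).symm
  have h4 : Tendsto (fun n => Z n ^ 2 + W n ^ 2 + 2 * co * (Z n * W n)) atTop (𝓝 1) := by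
    have := ((continuous_norm.tendsto _).comp hv).pow 2
    simp only [Function.comp_def, habse, one_pow] at this
    convert this using 2 with n
    exact (hnormv n).symm
  obtain ⟨hX1, hY0, hZ0, hW1⟩ := core co hcolt X Y Z W
    (fun n => by positivity) (fun n => by positivity) (fun n => by positivity)
    (fun n => by positivity) h1 h2 h3 h4
  -- complex limits of products of entries of P
  have prodlim : ∀ (g h : ℕ → ℂ) (Lg Lh : ℝ),
      Tendsto (fun n => ‖g n‖ ^ 2) atTop (𝓝 Lg) → Tendsto (fun n => ‖h n‖ ^ 2) atTop (𝓝 Lh) →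
      Tendsto (fun n => ‖g n * h n‖) atTop (𝓝 (Real.sqrt (Lg * Lh))) := by
    intro g h Lg Lh hg hh
    apply tendsto_norm_of_sq_tendsto
    have := hg.mul hh
    convert this using 2 with n
    rw [norm_mul, mul_pow]
  -- p1 * p2 → 0 etc.
  have hp1p2 : Tendsto (fun n => P n 0 0 * P n 1 0) atTop (𝓝 0) := by
    apply tendsto_zero_of_normsq
    have := hX1.mul hY0
    simp only [mul_zero] at this
    convert this using 2 with n
    rw [norm_mul, mul_pow]
  have hp2p2 : Tendsto (fun n => P n 1 0 * P n 1 0) atTop (𝓝 0) := by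
    apply tendsto_zero_of_normsq
    have := hY0.mul hY0
    simp only [mul_zero] at this
    convert this using 2 with n
    rw [norm_mul, mul_pow]
  have hp1q1 : Tendsto (fun n => P n 0 0 * P n 0 1) atTop (𝓝 0) := by
    apply tendsto_zero_of_normsq
    have := hX1.mul hZ0
    simp only [mul_zero] at this
    convert this using 2 with n
    rw [norm_mul, mul_pow]
  have hp2q1 : Tendsto (fun n => P n 1 0 * P n 0 1) atTop (𝓝 0) := by
    apply tendsto_zero_of_normsq
    have := hY0.mul hZ0
    simp only [mul_zero] at this
    convert this using 2 with n
    rw [norm_mul, mul_pow]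
  have hp2q2 : Tendsto (fun n => P n 1 0 * P n 1 1) atTop (𝓝 0) := by
    apply tendsto_zero_of_normsq
    have := hY0.mul hW1
    simp only [mul_zero, zero_mul] at this
    convert this using 2 with n
    rw [norm_mul, mul_pow]
  have hq1q2 : Tendsto (fun n => P n 0 1 * P n 1 1) atTop (𝓝 0) := by
    apply tendsto_zero_of_normsq
    have := hZ0.mul hW1
    simp only [mul_zero, zero_mul] at this
    convert this using 2 with n
    rw [norm_mul, mul_pow]
  have hq1q1 : Tendsto (fun n => P n 0 1 * P n 0 1) atTop (𝓝 0) := by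
    apply tendsto_zero_of_normsq
    have := hZ0.mul hZ0
    simp only [mul_zero] at this
    convert this using 2 with n
    rw [norm_mul, mul_pow]
  -- ‖p1 * p1‖ → 1, ‖p1 * q2‖ → 1, ‖q2 * q2‖ → 1
  have hnp1p1 : Tendsto (fun n => ‖P n 0 0 * P n 0 0‖) atTop (𝓝 1) := by
    have := prodlim _ _ _ _ hX1 hX1
    simpa using this
  have hnp1q2 : Tendsto (fun n => ‖P n 0 0 * P n 1 1‖) atTop (𝓝 1) := by
    have := prodlim _ _ _ _ hX1 hW1
    simpa using this
  have hnq2q2 : Tendsto (fun n => ‖P n 1 1 * P n 1 1‖) atTop (𝓝 1) := by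
    have := prodlim _ _ _ _ hW1 hW1
    simpa using this
  -- entry (0,0): a * p1 * p1 → a'
  have haa : Tendsto (fun n => a * (P n 0 0 * P n 0 0)) atTop (𝓝 a') := by
    have hl := hlim2 0 0
    have hent : Tendsto (fun n => (f n).2 0 0) atTop (𝓝 a') := by simpa using hl
    have hrest : Tendsto (fun n => b * (P n 0 0 * P n 1 0) + b * (P n 1 0 * P n 0 0)
        + d * (P n 1 0 * P n 1 0)) atTop (𝓝 0) := by
      have h1' := (hp1p2.const_mul b)
      have h2' : Tendsto (fun n => P n 1 0 * P n 0 0) atTop (𝓝 0) := by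
        have := hp1p2
        simp only [mul_comm] at this ⊢
        exact this
      have := (h1'.add (h2'.const_mul b)).add (hp2p2.const_mul d)
      simpa using this
    have := hent.sub hrest
    simp only [sub_zero] at this
    convert this using 2 with n
    rw [hsnd n 0 0]
    ring
  have hbb : Tendsto (fun n => b * (P n 0 0 * P n 1 1)) atTop (𝓝 b') := by
    have hl := hlim2 0 1
    have hent : Tendsto (fun n => (f n).2 0 1) atTop (𝓝 b') := by simpa using hl
    have hrest : Tendsto (fun n => a * (P n 0 0 * P n 0 1) + b * (P n 1 0 * P n 0 1)
        + d * (P n 1 0 * P n 1 1)) atTop (𝓝 0) := by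
      have := ((hp1q1.const_mul a).add (hp2q1.const_mul b)).add (hp2q2.const_mul d)
      simpa using this
    have := hent.sub hrest
    simp only [sub_zero] at this
    convert this using 2 with n
    rw [hsnd n 0 1]
    ring
  have hdd : Tendsto (fun n => d * (P n 1 1 * P n 1 1)) atTop (𝓝 d') := by
    have hl := hlim2 1 1
    have hent : Tendsto (fun n => (f n).2 1 1) atTop (𝓝 d') := by simpa using hl
    have hrest : Tendsto (fun n => a * (P n 0 1 * P n 0 1) + b * (P n 0 1 * P n 1 1)
        + b * (P n 1 1 * P n 0 1)) atTop (𝓝 0) := by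
      have h2' : Tendsto (fun n => P n 1 1 * P n 0 1) atTop (𝓝 0) := by
        have := hq1q2
        simp only [mul_comm] at this ⊢
        exact this
      have := ((hq1q1.const_mul a).add (hq1q2.const_mul b)).add (h2'.const_mul b)
      simpa using this
    have := hent.sub hrest
    simp only [sub_zero] at this
    convert this using 2 with n
    rw [hsnd n 1 1]
    ring
  -- conclude norms
  apply hne
  refine ⟨?_, ?_, ?_⟩
  · have l1 : Tendsto (fun n => ‖a * (P n 0 0 * P n 0 0)‖) atTop (𝓝 ‖a'‖) :=
      (continuous_norm.tendsto _).comp haa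
    have l2 : Tendsto (fun n => ‖a * (P n 0 0 * P n 0 0)‖) atTop (𝓝 ‖a‖) := by
      have := hnp1p1.const_mul ‖a‖
      simp only [mul_one] at this
      convert this using 2 with n
      rw [norm_mul]
    exact tendsto_nhds_unique l2 l1
  · have l1 : Tendsto (fun n => ‖b * (P n 0 0 * P n 1 1)‖) atTop (𝓝 ‖b'‖) :=
      (continuous_norm.tendsto _).comp hbb
    have l2 : Tendsto (fun n => ‖b * (P n 0 0 * P n 1 1)‖) atTop (𝓝 ‖b‖) := by
      have := hnp1q2.const_mul ‖b‖
      simp only [mul_one] at this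
      convert this using 2 with n
      rw [norm_mul]
    exact tendsto_nhds_unique l2 l1
  · have l1 : Tendsto (fun n => ‖d * (P n 1 1 * P n 1 1)‖) atTop (𝓝 ‖d'‖) :=
      (continuous_norm.tendsto _).comp hdd
    have l2 : Tendsto (fun n => ‖d * (P n 1 1 * P n 1 1)‖) atTop (𝓝 ‖d‖) := by
      have := hnq2q2.const_mul ‖d‖
      simp only [mul_one] at this
      convert this using 2 with n
      rw [norm_mul]
    exact tendsto_nhds_unique l2 l1
end
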